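/- arXiv:2407.20782 — 2 statements merged into one kernel-verified Lean document; each statement's English description precedes it below -/
import Mathlib

section
/- Let Σ be a finite alphabet, let v ∈ Σ* be nonempty, and let w ∈ Σ*. Define the directed graph G with vertex set {0, 1, …, |v|} and an edge i → j whenever w = v[i..|v|] · v^ℓ · v[0..j] for some ℓ ≥ 0 or w = v[i..j]. Then for every n ≥ 1 and all i, j ∈ {0, …, |v|}: the word w^n equals v[i..|v|] · v^ℓ · v[0..j] for some ℓ ≥ 0 or equals v[i..j], if and only if there is a directed path of length n from i to j in G. -/
/-! The words labelling an edge `i → j` are the factors of the periodic word `v v v ⋯` that start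
at a position `≡ i` and end at a position `≡ j` modulo `|v|`, with the empty word allowed
exactly when `j ≤ i`. Such a factor can be cut at any point into two factors of the same kind
meeting at some vertex `k`, and two nonempty ones glue back together. Reading
`w^(n+1) = w · w^n`, induction on `n` turns one factorisation into a path and back. -/

namespace Paper

/-- `wpow w n` is the word `w` repeated `n` times. -/
def wpow {α : Type} (w : List α) (n : ℕ) : List α := (List.replicate n w).flatten

/-- The factor `u[i..j]`: the word `a_{i+1} ⋯ a_j` if `i < j`, and `ε` if `j ≤ i`. -/
def factor {α : Type} (u : List α) (i j : ℕ) : List α := (u.take j).drop i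

/-- A succinct-NFA over the alphabet `α` with (finitely many) states `Q`:
an initial state, a set of final states, and a finite set of succinct transitions
`(p, w, n, p')`, where the transition reads the word `w^n`. -/
structure SNFA (α Q : Type) where
  init : Q
  final : Set Q
  trans : Set (Q × List α × ℕ × Q)
  finTrans : trans.Finite

variable {α Q : Type}

/-- `Reads A p u p'`: there is a run of the succinct-NFA `A` from state `p` to state
`p'` reading the word `u` (that is, `u = w₁^{n₁} ⋯ w_t^{n_t}` along a sequence of
consecutive transitions). -/
inductive Reads (A : SNFA α Q) : Q → List α → Q → Prop
  | nil (p : Q) : Reads A p [] p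
  | cons {p p' p'' : Q} {w : List α} {n : ℕ} {u : List α} :
      (p, w, n, p') ∈ A.trans → Reads A p' u p'' → Reads A p (wpow w n ++ u) p''

/-- `L(A)`: the set of words read by accepting runs of `A`. -/
def SNFA.language (A : SNFA α Q) : Set (List α) :=
  { u | ∃ f ∈ A.final, Reads A A.init u f }

/-- The succinct-NFA `A′` built from `A` and a nonempty word `v`: states `Q × {0, …,
|v|−1}`, initial state `(q₀, 0)`, final states `F × {0}`, and a transition
`((p, i), w, n, (p′, j))` whenever `(p, w, n, p′) ∈ δ` and either
`w^n = v[i..|v|] · v^ℓ · v[0..j]` for some `ℓ ≥ 0`, or `w^n = v[i..j]`. -/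
def SNFA.primed (A : SNFA α Q) (v : List α) (hv : 0 < v.length) :
    SNFA α (Q × Fin v.length) where
  init := (A.init, ⟨0, hv⟩)
  final := { s | s.1 ∈ A.final ∧ s.2 = ⟨0, hv⟩ }
  trans := { t | ∃ (p : Q) (i : Fin v.length) (w : List α) (n : ℕ) (p' : Q)
        (j : Fin v.length),
      t = ((p, i), w, n, (p', j)) ∧ (p, w, n, p') ∈ A.trans ∧
      ((∃ l, wpow w n = v.drop i.val ++ wpow v l ++ v.take j.val) ∨
        wpow w n = factor v i.val j.val) }
  finTrans := by
    have hfin : ((A.trans ×ˢ (Set.univ : Set (Fin v.length × Fin v.length))).image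
        (fun x : (Q × List α × ℕ × Q) × (Fin v.length × Fin v.length) =>
          (((x.1.1, x.2.1), x.1.2.1, x.1.2.2.1, (x.1.2.2.2, x.2.2)) :
            (Q × Fin v.length) × List α × ℕ × (Q × Fin v.length)))).Finite :=
      (A.finTrans.prod (Set.finite_univ)).image _
    apply Set.Finite.subset hfin
    rintro t ⟨p, i, w, n, p', j, rfl, ht, -⟩
    exact ⟨((p, w, n, p'), (i, j)), ⟨ht, trivial⟩, rfl⟩


/-- The edge relation of the graph `G` on vertices `{0, …, |v|}`: an edge `i → j`
whenever `w = v[i..|v|] · v^ℓ · v[0..j]` for some `ℓ ≥ 0` or `w = v[i..j]`. -/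
def edgeRel {α : Type} (v w : List α) (i j : ℕ) : Prop :=
  i ≤ v.length ∧ j ≤ v.length ∧
    ((∃ l : ℕ, w = v.drop i ++ wpow v l ++ v.take j) ∨ w = factor v i j)

/-- A directed path of length `n` from `i` to `j`: a sequence of `n` consecutive
edges starting at `i` and ending at `j`. -/
def pathLen (r : ℕ → ℕ → Prop) : ℕ → ℕ → ℕ → Prop
  | 0, i, j => i = j
  | n + 1, i, j => ∃ k, r i k ∧ pathLen r n k j

lemma wpow_succ (w : List α) (n : ℕ) : wpow w (n + 1) = w ++ wpow w n := by
  simp [wpow, List.replicate_succ]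

lemma wpow_add (w : List α) (a b : ℕ) : wpow w (a + b) = wpow w a ++ wpow w b := by
  rw [wpow, wpow, wpow, List.replicate_add, List.flatten_append]

lemma wpow_eq_nil_iff {w : List α} {n : ℕ} (hn : n ≠ 0) : wpow w n = [] ↔ w = [] := by
  simp [wpow, hn]

lemma length_wpow (w : List α) (n : ℕ) : (wpow w n).length = n * w.length := by
  simp [wpow]

def CycleFactor (v u : List α) (i j : ℕ) : Prop :=
  (∃ l : ℕ, u = v.drop i ++ wpow v l ++ v.take j) ∨ u = factor v i j

section CycleFactor

open List

variable {v u u' : List α} {i j k : ℕ}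

lemma factor_eq_nil_of_le (h : j ≤ i) : factor v i j = [] :=
  drop_eq_nil_of_le (by rw [length_take]; omega)

lemma lt_of_factor_ne_nil (h : factor v i j ≠ []) : i < j := by
  by_contra! hji
  exact h (factor_eq_nil_of_le hji)

lemma cycleFactor_nil_iff (hj : j ≤ v.length) : CycleFactor v [] i j ↔ j ≤ i := by
  constructor
  · rintro (⟨l, hl⟩ | hf)
    · rcases take_eq_nil_iff.mp (append_eq_nil_iff.mp hl.symm).2 with h | rfl
      · omega
      · simp at hj; omega
    · have := congrArg length hf
      simp only [length_nil, factor, length_drop, length_take] at this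
      omega
  · exact fun h => Or.inr (factor_eq_nil_of_le h).symm

lemma exists_take_drop_wpow_append_take (hj : j ≤ v.length) (l r : ℕ)
    (hr : r ≤ l * v.length + j) :
    ∃ k ≤ v.length, ∃ q : ℕ, (wpow v l ++ v.take j).take r = wpow v q ++ v.take k ∧
      CycleFactor v ((wpow v l ++ v.take j).drop r) k j := by
  induction l generalizing r with
  | zero =>
    refine ⟨r, by omega, 0, ?_, Or.inr ?_⟩
    · change take r (take j v) = take r v
      rw [take_take, min_eq_left (by omega)]
    · simp [wpow, factor, drop_take]
  | succ l ih =>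
    have hsplit : wpow v (l + 1) ++ v.take j = v ++ (wpow v l ++ v.take j) := by
      rw [wpow_succ, append_assoc]
    rcases lt_or_ge r v.length with hrv | hrv
    · refine ⟨r, hrv.le, 0, ?_, Or.inl ⟨l, ?_⟩⟩
      · rw [hsplit, take_append_of_le_length hrv.le]; simp [wpow]
      · rw [hsplit, drop_append_of_le_length hrv.le, append_assoc]
    · obtain ⟨k, hk, q, htake, hdrop⟩ := ih (r - v.length) (by rw [Nat.succ_mul] at hr; omega)
      obtain ⟨s, rfl⟩ : ∃ s, r = v.length + s := ⟨r - v.length, by omega⟩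
      refine ⟨k, hk, q + 1, ?_, ?_⟩
      · rw [hsplit, take_length_add_append, wpow_succ, append_assoc]
        simpa using htake
      · rw [hsplit, drop_length_add_append]
        simpa using hdrop

lemma CycleFactor.exists_split (hi : i ≤ v.length) (hj : j ≤ v.length)
    (h : CycleFactor v (u ++ u') i j) :
    ∃ k ≤ v.length, CycleFactor v u i k ∧ CycleFactor v u' k j := by
  obtain ⟨p, hp⟩ : ∃ p, u.length = p := ⟨_, rfl⟩
  have hu : u = (u ++ u').take p := by simp [← hp]
  have hu' : u' = (u ++ u').drop p := by simp [← hp]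
  have hlen : p + u'.length = (u ++ u').length := by simp [hp]
  rcases h with ⟨l, hl⟩ | hf
  · rw [append_assoc] at hl
    rw [hl] at hu hu' hlen
    simp only [length_append, length_drop, length_take, length_wpow] at hlen
    rcases le_or_gt p (v.length - i) with hpi | hpi
    · refine ⟨i + p, by omega, Or.inr ?_, Or.inl ⟨l, ?_⟩⟩
      · rw [hu, take_append_of_le_length (by rw [length_drop]; omega), factor, drop_take]
        congr 1; omega
      · rw [hu', drop_append_of_le_length (by rw [length_drop]; omega), drop_drop, ← append_assoc]
    · obtain ⟨k, hk, q, htake, hdrop⟩ :=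
        exists_take_drop_wpow_append_take hj l (p - (v.length - i)) (by omega)
      have hcut : p = (v.drop i).length + (p - (v.length - i)) := by rw [length_drop]; omega
      refine ⟨k, hk, Or.inl ⟨q, ?_⟩, ?_⟩
      · rw [hu, hcut, take_length_add_append, htake, ← append_assoc]
      · rwa [hu', hcut, drop_length_add_append]
  · rw [hf] at hu hu' hlen
    simp only [factor, length_drop, length_take] at hlen
    refine ⟨min (i + p) j, by omega, Or.inr ?_, Or.inr ?_⟩
    · rw [hu, factor, factor, drop_take, drop_take, take_take]
      congr 1; omega
    · rw [hu', factor, factor, drop_drop]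
      rcases le_or_gt (i + p) j with h | h
      · congr 1; omega
      · rw [drop_eq_nil_of_le (by rw [length_take]; omega), drop_eq_nil_of_le (by rw [length_take]; omega)]

lemma take_append_factor (h : k ≤ j) : v.take k ++ factor v k j = v.take j := by
  rw [factor]
  conv_rhs => rw [← take_append_drop k (v.take j), take_take, min_eq_left h]

lemma factor_append_drop (h : i ≤ k) : factor v i k ++ v.drop k = v.drop i := by
  rw [factor, drop_take]
  conv_rhs => rw [← take_append_drop (k - i) (v.drop i), drop_drop, Nat.add_sub_cancel' h]

lemma factor_append_factor (hik : i ≤ k) (hkj : k ≤ j) :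
    factor v i k ++ factor v k j = factor v i j := by
  have := factor_append_drop (v := v.take j) hik
  rwa [factor, take_take, min_eq_left hkj] at this

lemma CycleFactor.append (hu : u ≠ []) (hu' : u' ≠ []) (h : CycleFactor v u i k)
    (h' : CycleFactor v u' k j) : CycleFactor v (u ++ u') i j := by
  rcases h with ⟨l, rfl⟩ | rfl <;> rcases h' with ⟨m, rfl⟩ | rfl
  · -- `v[k..|v|]` and `v[0..k]` merge into one more copy of `v`
    refine Or.inl ⟨l + 1 + m, ?_⟩
    rw [show l + 1 + m = l + (m + 1) by omega, wpow_add, wpow_succ]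
    simp only [append_assoc]
    rw [← append_assoc (take k v), take_append_drop]
  · refine Or.inl ⟨l, ?_⟩
    simp only [append_assoc, take_append_factor (lt_of_factor_ne_nil hu').le]
  · refine Or.inl ⟨m, ?_⟩
    simp only [← append_assoc, factor_append_drop (lt_of_factor_ne_nil hu).le]
  · exact Or.inr (factor_append_factor (lt_of_factor_ne_nil hu).le (lt_of_factor_ne_nil hu').le)

lemma cycleFactor_append_iff (hne : u = [] ↔ u' = []) (hi : i ≤ v.length)
    (hj : j ≤ v.length) :
    CycleFactor v (u ++ u') i j ↔ ∃ k ≤ v.length, CycleFactor v u i k ∧ CycleFactor v u' k j := by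
  refine ⟨CycleFactor.exists_split hi hj, fun ⟨k, hk, h, h'⟩ => ?_⟩
  by_cases hu : u = []
  · obtain rfl := hu
    obtain rfl := hne.mp rfl
    rw [cycleFactor_nil_iff hk] at h
    rw [cycleFactor_nil_iff hj] at h'
    rw [nil_append, cycleFactor_nil_iff hj]
    omega
  · exact h.append hu (mt hne.mpr hu) h'

end CycleFactor

theorem statement11_general {α : Type} (v : List α)
    (w : List α) (n : ℕ) (hn : 1 ≤ n) (i j : ℕ)
    (hi : i ≤ v.length) (hj : j ≤ v.length) :
    ((∃ l : ℕ, wpow w n = v.drop i ++ wpow v l ++ v.take j) ∨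
        wpow w n = factor v i j) ↔
      pathLen (edgeRel v w) n i j := by
  change CycleFactor v (wpow w n) i j ↔ _
  induction n, hn using Nat.le_induction generalizing i with
  | base =>
    simp only [pathLen, edgeRel, wpow, List.replicate_one, List.flatten_singleton]
    exact ⟨fun h => ⟨j, ⟨hi, hj, h⟩, rfl⟩, fun ⟨_, ⟨_, _, h⟩, rfl⟩ => h⟩
  | succ n hn ih =>
    have hne : w = [] ↔ wpow w n = [] := (wpow_eq_nil_iff (by omega)).symm
    rw [wpow_succ, cycleFactor_append_iff hne hi hj]
    simp only [pathLen, edgeRel]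
    constructor
    · rintro ⟨k, hk, hw, hpath⟩
      exact ⟨k, ⟨hi, hk, hw⟩, (ih k hk).mp hpath⟩
    · rintro ⟨k, ⟨-, hk, hw⟩, hpath⟩
      exact ⟨k, hk, hw, (ih k hk).mpr hpath⟩

/-- for every `n ≥ 1` and `i, j ∈ {0, …, |v|}`, the word `w^n`
equals `v[i..|v|] · v^ℓ · v[0..j]` for some `ℓ ≥ 0` or equals `v[i..j]` iff there
is a directed path of length `n` from `i` to `j` in `G`. -/
theorem statement11 {α : Type} [Fintype α] (v : List α) (hv : 0 < v.length)
    (w : List α) (n : ℕ) (hn : 1 ≤ n) (i j : ℕ)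
    (hi : i ≤ v.length) (hj : j ≤ v.length) :
    ((∃ l : ℕ, wpow w n = v.drop i ++ wpow v l ++ v.take j) ∨
        wpow w n = factor v i j) ↔
      pathLen (edgeRel v w) n i j :=
  statement11_general v w n hn i j hi hj

end Paper
end

section
/- Let q ∈ UCRPQ(SSF, a*) over a finite alphabet Σ and let A ⊆ Σ. Then q is A-bounded if, and only if, q is equivalent to q(A, m) for some m ∈ ℕ. -/
namespace Paper

/-! ## Graph databases -/

/-- A graph database over the alphabet `α`: a finite set of vertices together with
labelled edges. -/
structure GDB (α : Type) : Type 1 where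
  V : Type
  finV : Finite V
  edges : Set (V × α × V)

/-! ## Conjunctive queries -/

/-- A (Boolean) conjunctive query over `α`: a finite set of variables and a set of
atoms `x —a→ y` with `a ∈ α`. -/
structure CQ (α : Type) : Type 1 where
  V : Type
  finV : Finite V
  atoms : Set (V × α × V)

variable {α : Type}

/-- `h` is a homomorphism from the CQ `p` to the CQ `p'`. -/
def CQ.Hom (p p' : CQ α) (h : p.V → p'.V) : Prop :=
  ∀ x a y, (x, a, y) ∈ p.atoms → (h x, a, h y) ∈ p'.atoms

/-- There is a homomorphism from the CQ `p` to the CQ `p'`. -/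
def CQ.homTo (p p' : CQ α) : Prop := ∃ h, p.Hom p' h

/-- There is a homomorphism from the CQ `p` to the graph database `G`. -/
def CQ.homToG (p : CQ α) (G : GDB α) : Prop :=
  ∃ h : p.V → G.V, ∀ x a y, (x, a, y) ∈ p.atoms → (h x, a, h y) ∈ G.edges

/-! ## CRPQs -/

/-- A (Boolean) conjunctive regular path query over alphabet `α` with variables `V`:
a finite conjunction of atoms `src i —lang i→ tgt i`. -/
structure CRPQ (α V : Type) where
  k : ℕ
  src : Fin k → V
  lang : Fin k → Set (List α)
  tgt : Fin k → V

variable {V : Type}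

/-! ## Expansions -/

/-- Variables of an expansion before collapsing equality atoms: the original variables
plus, for each atom `i` expanded by the word `w i`, the fresh variables
`z_1, …, z_{|w i| - 1}`. -/
def RawVar (q : CRPQ α V) (w : Fin q.k → List α) : Type :=
  V ⊕ (Σ i : Fin q.k, Fin ((w i).length - 1))

instance {q : CRPQ α V} [Finite V] {w : Fin q.k → List α} : Finite (RawVar q w) := by
  unfold RawVar; infer_instance

/-- The `j`-th variable (`0 ≤ j ≤ |w i|`) on the path expanding atom `i`:
position `0` is the source variable, position `|w i|` the target variable, and the
intermediate positions are fresh variables. -/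
def node (q : CRPQ α V) (w : Fin q.k → List α) (i : Fin q.k) (j : ℕ) : RawVar q w :=
  if j = 0 then Sum.inl (q.src i)
  else if j = (w i).length then Sum.inl (q.tgt i)
  else if h : j - 1 < (w i).length - 1 then Sum.inr ⟨i, ⟨j - 1, h⟩⟩
  else Sum.inl (q.src i)

/-- The equality atoms produced by `ε`-expansions: `src i = tgt i` whenever `w i = ε`.
(The expansion collapses the equivalence they generate.) -/
def eqRel (q : CRPQ α V) (w : Fin q.k → List α) : RawVar q w → RawVar q w → Prop :=
  fun x y => ∃ i, w i = [] ∧ x = Sum.inl (q.src i) ∧ y = Sum.inl (q.tgt i)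

/-- The expansion of the CRPQ `q` obtained by expanding each atom `i` with the word
`w i`: each atom is replaced by its `w i`-expansion, and equality atoms are collapsed. -/
def expansion (q : CRPQ α V) [Finite V] (w : Fin q.k → List α) : CQ α where
  V := Quot (eqRel q w)
  finV := Finite.of_surjective (Quot.mk _) fun x => Quot.exists_rep x
  atoms := { t | ∃ (i : Fin q.k) (j : ℕ) (hj : j < (w i).length),
    t = (Quot.mk _ (node q w i j), (w i).get ⟨j, hj⟩, Quot.mk _ (node q w i (j + 1))) }

/-- `Exp q`: the set of all expansions of the CRPQ `q`. -/
def Exp (q : CRPQ α V) [Finite V] : Set (CQ α) :=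
  { p | ∃ w : Fin q.k → List α, (∀ i, w i ∈ q.lang i) ∧ p = expansion q w }

/-- `Expm q m`: the set of all `m`-expansions of the CRPQ `q`. -/
def Expm (q : CRPQ α V) [Finite V] (m : ℕ) : Set (CQ α) :=
  { p | ∃ w : Fin q.k → List α,
      (∀ i, w i ∈ q.lang i) ∧ (∀ i, (w i).length ≤ m) ∧ p = expansion q w }

/-! ## UCRPQs, satisfaction, containment, boundedness -/

/-- The set of expansions of a UCRPQ (a finite disjunction of CRPQs). -/
def ExpU (Q : List (CRPQ α V)) [Finite V] : Set (CQ α) :=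
  { p | ∃ q ∈ Q, p ∈ Exp q }

/-- The set of `m`-expansions of a UCRPQ. -/
def ExpmU (Q : List (CRPQ α V)) [Finite V] (m : ℕ) : Set (CQ α) :=
  { p | ∃ q ∈ Q, p ∈ Expm q m }

/-- Satisfaction of a (possibly infinite) disjunction of CQs by a graph database. -/
def SatSet (S : Set (CQ α)) (G : GDB α) : Prop := ∃ p ∈ S, p.homToG G

/-- `G ⊨ Q` for a UCRPQ `Q`: some expansion of `Q` maps homomorphically into `G`. -/
def Sat (Q : List (CRPQ α V)) [Finite V] (G : GDB α) : Prop := SatSet (ExpU Q) G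

/-- Containment of queries (viewed as properties of graph databases):
every graph database satisfying the first satisfies the second. -/
def Contained (P P' : GDB α → Prop) : Prop := ∀ G, P G → P' G

/-- Equivalence of queries (viewed as properties of graph databases). -/
def QEquiv (P P' : GDB α → Prop) : Prop := ∀ G, P G ↔ P' G

/-- A query is bounded iff it is equivalent to some UCQ (finite disjunction of CQs). -/
def Bounded (P : GDB α → Prop) : Prop :=
  ∃ Φ : List (CQ α), ∀ G, P G ↔ ∃ p ∈ Φ, p.homToG G


/-! ## The class UCRPQ(SSF, w*) -/

/-- An atom language in the class (SSF, w*): either a succinct star-free expression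
(denoting a finite language), or `w*` for a word `w`. -/
inductive AtomLang (α : Type) : Type where
  | ssf (L : Set (List α)) (h : L.Finite) : AtomLang α
  | star (w : List α) : AtomLang α

variable {α V : Type}

/-- The language denoted by an atom of the class (SSF, w*). -/
def AtomLang.language : AtomLang α → Set (List α)
  | .ssf L _ => L
  | .star w => { u | ∃ n, u = wpow w n }

/-- A CRPQ all of whose atom languages are SSF expressions or expressions `w*`. -/
structure SCRPQ (α V : Type) where
  k : ℕ
  src : Fin k → V
  lang : Fin k → AtomLang α
  tgt : Fin k → V

/-- The underlying CRPQ of an SCRPQ. -/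
def SCRPQ.toCRPQ (q : SCRPQ α V) : CRPQ α V :=
  ⟨q.k, q.src, fun i => (q.lang i).language, q.tgt⟩

/-- The underlying UCRPQ of a UCRPQ in the class (SSF, w*). -/
def toU (Q : List (SCRPQ α V)) : List (CRPQ α V) := Q.map SCRPQ.toCRPQ

/-- Satisfaction for UCRPQs of the class (SSF, w*). -/
def SatS (Q : List (SCRPQ α V)) [Finite V] (G : GDB α) : Prop := Sat (toU Q) G

/-- `AtomLang.cut m`: replace `w*` with `w^{≤m} = {w^n : n ≤ m}`; SSF atoms unchanged. -/
def AtomLang.cut (m : ℕ) : AtomLang α → AtomLang α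
  | .ssf L h => .ssf L h
  | .star w => .ssf (wpow w '' Set.Iic m) ((Set.finite_Iic m).image _)

/-- `q(m)` for a CRPQ: replace every expression `w*` with `w^{≤m}`. -/
def SCRPQ.cut (m : ℕ) (q : SCRPQ α V) : SCRPQ α V :=
  ⟨q.k, q.src, fun i => (q.lang i).cut m, q.tgt⟩

/-- `q(m)` for a UCRPQ: replace every expression `w*` with `w^{≤m}`. -/
def qcut (Q : List (SCRPQ α V)) (m : ℕ) : List (SCRPQ α V) := Q.map (SCRPQ.cut m)

/-- `‖Q‖`: number of atoms of the UCRPQ `Q`. -/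
def natoms (Q : List (SCRPQ α V)) : ℕ := (Q.map SCRPQ.k).sum

/-- The set `W` of words `w` such that `w*` labels a recursive atom of `Q`. -/
def recWords (Q : List (SCRPQ α V)) : Set (List α) :=
  { w | ∃ q ∈ Q, ∃ i : Fin q.k, q.lang i = AtomLang.star w }

/-- `N`: the maximum length of a word in the language of a non-recursive atom of `Q`. -/
noncomputable def nrBound (Q : List (SCRPQ α V)) : ℕ :=
  sSup { n | ∃ q ∈ Q, ∃ i : Fin q.k, ∃ (L : Set (List α)) (h : L.Finite),
    q.lang i = AtomLang.ssf L h ∧ ∃ u ∈ L, u.length = n }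

/-- `Z := ‖Q‖³ · N · |vars(Q)| · Π_{w ∈ W} |w|`. -/
noncomputable def Zbound (Q : List (SCRPQ α V)) [Fintype V] : ℕ :=
  natoms Q ^ 3 * nrBound Q * Fintype.card V * ∏ᶠ w ∈ recWords Q, w.length

/-- `Z⁺ := ‖Q‖ · Z + 1`. -/
noncomputable def Zplus (Q : List (SCRPQ α V)) [Fintype V] : ℕ :=
  natoms Q * Zbound Q + 1

/-! ## Letter-boundedness -/

/-- Membership in the class UCRPQ(SSF, a*): atoms are SSF or `a*` for a letter `a`. -/
def AtomLang.inSSFaStar : AtomLang α → Prop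
  | .ssf _ _ => True
  | .star w => ∃ a, w = [a]

/-- Membership in the class UCRPQ(a, a*): every atom language is `{a}` or `{a}*`
for a letter `a`. -/
def AtomLang.in_a_aStar : AtomLang α → Prop
  | .ssf L _ => ∃ a : α, L = {[a]}
  | .star w => ∃ a, w = [a]

/-- An atom language which is an SSF expression or `a*` only for letters `a ∉ A`. -/
def AtomLang.okOutside (A : Set α) : AtomLang α → Prop
  | .ssf _ _ => True
  | .star w => ∃ a, a ∉ A ∧ w = [a]

open Classical in
/-- Replace `a*` with `a^{≤m} = {ε, a, …, a^m}` for every letter `a ∈ A`. -/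
noncomputable def AtomLang.restrict (A : Set α) (m : ℕ) : AtomLang α → AtomLang α
  | .ssf L h => .ssf L h
  | .star w => if ∃ a ∈ A, w = [a]
      then .ssf (wpow w '' Set.Iic m) ((Set.finite_Iic m).image _)
      else .star w

/-- `q(A, m)` (also `q[A ↦ m]`) for a CRPQ. -/
noncomputable def SCRPQ.restrict (A : Set α) (m : ℕ) (q : SCRPQ α V) : SCRPQ α V :=
  ⟨q.k, q.src, fun i => (q.lang i).restrict A m, q.tgt⟩

/-- `Q(A, m)` (also `Q[A ↦ m]`): the result of replacing in `Q` every atom language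
`a*` with `a ∈ A` by `a^{≤m}`. -/
noncomputable def qrestrict (Q : List (SCRPQ α V)) (A : Set α) (m : ℕ) :
    List (SCRPQ α V) := Q.map (SCRPQ.restrict A m)

/-- `Q` is `A`-bounded: `Q` is equivalent to some UCRPQ whose atom languages are SSF
expressions or expressions `a*` only for letters `a ∉ A`. -/
def BddIn (Q : List (SCRPQ α V)) [Finite V] (A : Set α) : Prop :=
  ∃ (n : ℕ) (Q' : List (SCRPQ α (Fin n))),
    (∀ d ∈ Q', ∀ i : Fin d.k, (d.lang i).okOutside A) ∧ QEquiv (SatS Q) (SatS Q')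


/-!
Suppose `q ≡ Q'`, where `Q'` has no atom `a*` with `a ∈ A`. In an expansion `F` of `Q'`, an
`a`-edge with `a ∈ A` comes from a finite atom, so it starts at one of at most
`m := ‖Q'‖ · N` vertices; by pigeonhole every `a`-path in `F` shortens to one of length at
most `m`. Now `F` satisfies `Q'`, hence `q`, and shortening the paths that witness the atoms
`a*` shows that `F` satisfies `q(A, m)`. Since every database satisfying `Q'` receives a
homomorphism from such an `F`, this gives `q ⊑ q(A, m)`; the converse containment is
trivial. Conversely, `q(A, m)` itself witnesses that `q` is `A`-bounded.
-/

theorem wpow_singleton (a : α) (n : ℕ) : wpow [a] n = List.replicate n a := by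
  induction n with
  | zero => rfl
  | succ n ih => rw [wpow, List.replicate_succ, List.flatten_cons, ← wpow, ih]; rfl

section Walks

variable {β ι : Type*}

theorem exists_walk_shortcut {R : β → β → Prop} {f : ℕ → β} {n p q : ℕ}
    (hf : ∀ j < n, R (f j) (f (j + 1))) (hpq : p < q) (hqn : q ≤ n) (hfpq : f p = f q) :
    ∃ g : ℕ → β, g 0 = f 0 ∧ g (n - (q - p)) = f n ∧
      ∀ j < n - (q - p), R (g j) (g (j + 1)) := by
  refine ⟨fun j => if j ≤ p then f j else f (j + (q - p)), by simp, ?_, fun j hj => ?_⟩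
  · dsimp only
    split_ifs with h
    · rw [show n - (q - p) = p by omega, hfpq, show q = n by omega]
    · congr 1; omega
  · dsimp only
    rcases lt_trichotomy j p with h | rfl | h
    · rw [if_pos h.le, if_pos (by omega)]; exact hf j (by omega)
    · rw [if_pos le_rfl, if_neg (by omega), hfpq, show j + 1 + (q - j) = q + 1 by omega]
      exact hf q (by omega)
    · rw [if_neg (by omega), if_neg (by omega), show j + 1 + (q - p) = j + (q - p) + 1 by omega]
      exact hf _ (by omega)

/-- Pigeonhole: a walk longer than the number of possible sources of its steps repeats a
vertex, and cutting out the cycle shortens it. -/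
theorem exists_walk_length_le_card [Fintype ι] {R : β → β → Prop} (φ : ι → β)
    (hφ : ∀ x y, R x y → x ∈ Set.range φ) (n : ℕ) (f : ℕ → β)
    (hf : ∀ j < n, R (f j) (f (j + 1))) :
    ∃ n' ≤ Fintype.card ι, ∃ g : ℕ → β, g 0 = f 0 ∧ g n' = f n ∧
      ∀ j < n', R (g j) (g (j + 1)) := by
  classical
  induction n using Nat.strong_induction_on generalizing f with
  | _ n ih =>
  by_cases hn : n ≤ Fintype.card ι
  · exact ⟨n, hn, f, rfl, rfl, hf⟩
  have hcard : (Finset.univ.image φ).card < (Finset.range n).card := by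
    rw [Finset.card_range]
    exact Finset.card_image_le.trans_lt (by simpa using hn)
  have hmaps : ∀ j ∈ Finset.range n, f j ∈ Finset.univ.image φ := by
    intro j hj
    obtain ⟨i, hi⟩ := hφ _ _ (hf j (Finset.mem_range.1 hj))
    exact Finset.mem_image.2 ⟨i, Finset.mem_univ _, hi⟩
  obtain ⟨p, hp, q, hq, hne, hfpq⟩ := Finset.exists_ne_map_eq_of_card_lt_of_maps_to hcard hmaps
  rw [Finset.mem_range] at hp hq
  wlog hpq : p < q generalizing p q
  · exact this q hq p hp hne.symm hfpq.symm (by omega)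
  obtain ⟨g, hg0, hgn, hg⟩ := exists_walk_shortcut hf hpq hq.le hfpq
  obtain ⟨n', hn', g', h0, hend, hg'⟩ := ih _ (by omega) g hg
  exact ⟨n', hn', g', h0.trans hg0, hend.trans hgn, hg'⟩

end Walks

section Paths

def GDB.Path (G : GDB α) (x : G.V) (u : List α) (y : G.V) : Prop :=
  ∃ f : ℕ → G.V, f 0 = x ∧ f u.length = y ∧
    ∀ j (hj : j < u.length), (f j, u[j], f (j + 1)) ∈ G.edges

theorem GDB.Path.map {G H : GDB α} {φ : G.V → H.V}
    (hφ : ∀ x a y, (x, a, y) ∈ G.edges → (φ x, a, φ y) ∈ H.edges) {x y : G.V}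
    {u : List α} (h : G.Path x u y) : H.Path (φ x) u (φ y) := by
  obtain ⟨f, rfl, rfl, hf⟩ := h
  exact ⟨φ ∘ f, rfl, rfl, fun j hj => hφ _ _ _ (hf j hj)⟩

theorem GDB.path_replicate_iff {G : GDB α} {x y : G.V} {a : α} {n : ℕ} :
    G.Path x (List.replicate n a) y ↔
      ∃ f : ℕ → G.V, f 0 = x ∧ f n = y ∧ ∀ j < n, (f j, a, f (j + 1)) ∈ G.edges := by
  simp [GDB.Path]

theorem GDB.exists_replicate_path_length_le_card {G : GDB α} {a : α} {ι : Type*} [Fintype ι]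
    (φ : ι → G.V) (hφ : ∀ x y, (x, a, y) ∈ G.edges → x ∈ Set.range φ) {x y : G.V}
    {n : ℕ} (h : G.Path x (List.replicate n a) y) :
    ∃ n' ≤ Fintype.card ι, G.Path x (List.replicate n' a) y := by
  obtain ⟨f, rfl, rfl, hf⟩ := GDB.path_replicate_iff.1 h
  obtain ⟨n', hn', g, h0, hend, hg⟩ := exists_walk_length_le_card φ hφ n f hf
  exact ⟨n', hn', GDB.path_replicate_iff.2 ⟨g, h0, hend, hg⟩⟩

def CQ.toGDB (p : CQ α) : GDB α := ⟨p.V, p.finV, p.atoms⟩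

theorem CQ.homToG_toGDB (p : CQ α) : p.homToG p.toGDB :=
  ⟨id, fun _ _ _ h => h⟩

end Paths

section Expansions

theorem node_zero (q : CRPQ α V) (w : Fin q.k → List α) (i : Fin q.k) :
    node q w i 0 = Sum.inl (q.src i) :=
  if_pos rfl

theorem node_length (q : CRPQ α V) (w : Fin q.k → List α) (i : Fin q.k)
    (h : (w i).length ≠ 0) : node q w i (w i).length = Sum.inl (q.tgt i) :=
  (if_neg h).trans (if_pos rfl)

theorem node_of_ne_zero_of_lt (q : CRPQ α V) (w : Fin q.k → List α) (i : Fin q.k) {j : ℕ}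
    (h0 : j ≠ 0) (h : j < (w i).length) :
    node q w i j = Sum.inr ⟨i, ⟨j - 1, by omega⟩⟩ :=
  (if_neg h0).trans ((if_neg h.ne).trans (dif_pos (by omega)))

theorem expansion_homToG_iff [Finite V] (q : CRPQ α V) (w : Fin q.k → List α) (G : GDB α) :
    (expansion q w).homToG G ↔
      ∃ μ : V → G.V, ∀ i, G.Path (μ (q.src i)) (w i) (μ (q.tgt i)) := by
  constructor
  · rintro ⟨g, hg⟩
    let ι : RawVar q w → (expansion q w).V := Quot.mk _
    refine ⟨fun v => g (ι (.inl v)), fun i =>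
      ⟨fun j => g (ι (node q w i j)), congrArg (g ∘ ι) (node_zero q w i), ?_,
        fun j hj => hg _ _ _ ⟨i, j, hj, rfl⟩⟩⟩
    by_cases h : w i = []
    · show g (ι (node q w i (w i).length)) = g (ι (.inl (q.tgt i)))
      rw [h, List.length_nil, node_zero]
      exact congrArg g (Quot.sound ⟨i, h, rfl, rfl⟩)
    · exact congrArg (g ∘ ι) (node_length q w i (by simpa using h))
  · rintro ⟨μ, hμ⟩
    choose f hf0 hflen hfedge using hμ
    let r : RawVar q w → G.V := Sum.elim μ fun z => f z.1 (z.2 + 1)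
    have hr : ∀ i j, j ≤ (w i).length → r (node q w i j) = f i j := by
      intro i j hj
      rcases Nat.eq_zero_or_pos j with rfl | hj0
      · rw [node_zero, hf0]; rfl
      rcases hj.eq_or_lt with rfl | hjlt
      · rw [node_length q w i hj0.ne', hflen]; rfl
      · rw [node_of_ne_zero_of_lt q w i hj0.ne' hjlt]
        exact congrArg (f i) (Nat.sub_add_cancel hj0)
    refine ⟨Quot.lift r ?_, ?_⟩
    · rintro _ _ ⟨i, hi, rfl, rfl⟩
      show μ (q.src i) = μ (q.tgt i)
      rw [← hf0, ← hflen, hi]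
      rfl
    · rintro _ _ _ ⟨i, j, hj, ⟨⟩⟩
      show (r (node q w i j), _, r (node q w i (j + 1))) ∈ G.edges
      rw [hr i j hj.le, hr i (j + 1) hj]
      exact hfedge i j hj

end Expansions

section Semantics

def SCRPQ.Holds (d : SCRPQ α V) (G : GDB α) : Prop :=
  ∃ μ : V → G.V, ∀ i, ∃ u ∈ (d.lang i).language, G.Path (μ (d.src i)) u (μ (d.tgt i))

theorem satS_iff [Finite V] (Q : List (SCRPQ α V)) (G : GDB α) :
    SatS Q G ↔ ∃ d ∈ Q, d.Holds G := by
  constructor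
  · rintro ⟨_, ⟨_, hd, w, hw, rfl⟩, hhom⟩
    obtain ⟨d, hdQ, rfl⟩ := List.mem_map.1 hd
    obtain ⟨μ, hμ⟩ := (expansion_homToG_iff _ w G).1 hhom
    exact ⟨d, hdQ, μ, fun i => ⟨w i, hw i, hμ i⟩⟩
  · rintro ⟨d, hd, μ, hμ⟩
    choose w hw hpath using hμ
    exact ⟨_, ⟨d.toCRPQ, List.mem_map_of_mem (f := SCRPQ.toCRPQ) hd, w, hw, rfl⟩,
      (expansion_homToG_iff d.toCRPQ w G).2 ⟨μ, hpath⟩⟩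

theorem SCRPQ.Holds.map {d : SCRPQ α V} {G H : GDB α} {φ : G.V → H.V}
    (hφ : ∀ x a y, (x, a, y) ∈ G.edges → (φ x, a, φ y) ∈ H.edges) (h : d.Holds G) :
    d.Holds H := by
  obtain ⟨μ, hμ⟩ := h
  exact ⟨φ ∘ μ, fun i => (hμ i).imp fun _ ⟨hu, hp⟩ => ⟨hu, hp.map hφ⟩⟩

def SCRPQ.rename {V₂ : Type} (e : V → V₂) (s : SCRPQ α V) : SCRPQ α V₂ :=
  ⟨s.k, e ∘ s.src, s.lang, e ∘ s.tgt⟩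

theorem SCRPQ.holds_rename_iff {V₂ : Type} (e : V ≃ V₂) (d : SCRPQ α V) (G : GDB α) :
    (d.rename e).Holds G ↔ d.Holds G :=
  ⟨fun ⟨μ, hμ⟩ => ⟨μ ∘ e, hμ⟩,
    fun ⟨μ, hμ⟩ => ⟨μ ∘ e.symm, fun i => by
      show ∃ u ∈ (d.lang i).language,
        G.Path (μ (e.symm (e (d.src i)))) u (μ (e.symm (e (d.tgt i))))
      simpa only [Equiv.symm_apply_apply] using hμ i⟩⟩

theorem satS_map_rename {V₂ : Type} [Finite V] [Finite V₂] (e : V ≃ V₂)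
    (Q : List (SCRPQ α V)) (G : GDB α) : SatS (Q.map (SCRPQ.rename e)) G ↔ SatS Q G := by
  rw [satS_iff, satS_iff]
  constructor
  · rintro ⟨_, hd, hdG⟩
    obtain ⟨d, hdQ, rfl⟩ := List.mem_map.1 hd
    exact ⟨d, hdQ, (SCRPQ.holds_rename_iff e d G).1 hdG⟩
  · rintro ⟨d, hd, hdG⟩
    exact ⟨_, List.mem_map_of_mem hd, (SCRPQ.holds_rename_iff e d G).2 hdG⟩

end Semantics

section Restrict

variable {A : Set α} {m : ℕ}

theorem AtomLang.restrict_eq_self {l : AtomLang α} (h : ¬∃ a ∈ A, l = .star [a]) :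
    l.restrict A m = l := by
  cases l with
  | ssf _ _ => rfl
  | star w =>
    rw [AtomLang.restrict, if_neg]
    rintro ⟨a, ha, rfl⟩
    exact h ⟨a, ha, rfl⟩

theorem AtomLang.wpow_mem_language_restrict_star {a : α} (ha : a ∈ A) {n : ℕ} (hn : n ≤ m) :
    wpow [a] n ∈ ((AtomLang.star [a]).restrict A m).language := by
  rw [AtomLang.restrict, if_pos ⟨a, ha, rfl⟩]
  exact ⟨n, hn, rfl⟩

theorem AtomLang.language_restrict_subset (l : AtomLang α) :
    (l.restrict A m).language ⊆ l.language := by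
  by_cases h : ∃ a ∈ A, l = .star [a]
  · obtain ⟨a, ha, rfl⟩ := h
    rw [AtomLang.restrict, if_pos ⟨a, ha, rfl⟩]
    rintro _ ⟨n, -, rfl⟩
    exact ⟨n, rfl⟩
  · rw [AtomLang.restrict_eq_self h]

theorem AtomLang.InSSFaStar.okOutside_restrict {l : AtomLang α} (hl : l.inSSFaStar) :
    (l.restrict A m).okOutside A := by
  cases l with
  | ssf _ _ => trivial
  | star w =>
    obtain ⟨a, rfl⟩ := hl
    rw [AtomLang.restrict]
    split_ifs with h
    · trivial
    · exact ⟨a, fun ha => h ⟨a, ha, rfl⟩, rfl⟩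

theorem SCRPQ.Holds.of_restrict {d : SCRPQ α V} {G : GDB α} (h : (d.restrict A m).Holds G) :
    d.Holds G := by
  obtain ⟨μ, hμ⟩ := h
  exact ⟨μ, fun i => (hμ i).imp fun _ ⟨hu, hp⟩ =>
    ⟨AtomLang.language_restrict_subset _ hu, hp⟩⟩

theorem SCRPQ.Holds.restrict {d : SCRPQ α V} {G : GDB α}
    (hG : ∀ a ∈ A, ∀ (x y : G.V) (n : ℕ), G.Path x (List.replicate n a) y →
      ∃ n' ≤ m, G.Path x (List.replicate n' a) y)
    (h : d.Holds G) : (d.restrict A m).Holds G := by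
  obtain ⟨μ, hμ⟩ := h
  refine ⟨μ, fun i => ?_⟩
  obtain ⟨u, hu, hp⟩ := hμ i
  show ∃ u ∈ ((d.lang i).restrict A m).language, _
  by_cases hA : ∃ a ∈ A, d.lang i = .star [a]
  · obtain ⟨a, ha, hi⟩ := hA
    rw [hi] at hu ⊢
    obtain ⟨n, rfl⟩ := hu
    rw [wpow_singleton] at hp
    obtain ⟨n', hn', hp'⟩ := hG a ha _ _ n hp
    exact ⟨wpow [a] n', AtomLang.wpow_mem_language_restrict_star ha hn', by
      rwa [wpow_singleton]⟩
  · rw [AtomLang.restrict_eq_self hA]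
    exact ⟨u, hu, hp⟩

theorem satS_of_satS_qrestrict [Finite V] {Q : List (SCRPQ α V)} {G : GDB α}
    (h : SatS (qrestrict Q A m) G) : SatS Q G := by
  obtain ⟨_, hd, hdG⟩ := (satS_iff _ G).1 h
  rw [qrestrict, List.mem_map] at hd
  obtain ⟨d, hd, rfl⟩ := hd
  exact (satS_iff Q G).2 ⟨d, hd, hdG.of_restrict⟩

end Restrict

section BoundedPaths

variable {W : Type} {Q' : List (SCRPQ α W)}

theorem k_le_natoms_of_mem {d : SCRPQ α W} (hd : d ∈ Q') : d.k ≤ natoms Q' :=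
  List.single_le_sum (fun _ _ => Nat.zero_le _) _ (List.mem_map_of_mem hd)

theorem AtomLang.finite_ssf_lengths (l : AtomLang α) :
    {n | ∃ (L : Set (List α)) (h : L.Finite), l = .ssf L h ∧
      ∃ u ∈ L, u.length = n}.Finite := by
  cases l with
  | ssf L hL =>
    refine (hL.image List.length).subset ?_
    rintro n ⟨L', h', hL', u, hu, rfl⟩
    cases hL'
    exact ⟨u, hu, rfl⟩
  | star w => simp

theorem length_le_nrBound {d : SCRPQ α W} (hd : d ∈ Q') {i : Fin d.k} {L : Set (List α)}
    {h : L.Finite} (hi : d.lang i = .ssf L h) {u : List α} (hu : u ∈ L) :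
    u.length ≤ nrBound Q' := by
  refine le_csSup (Set.Finite.bddAbove ?_) ⟨d, hd, i, L, h, hi, u, hu, rfl⟩
  refine ((List.finite_toSet Q').biUnion fun d _ =>
    Set.finite_iUnion fun i => (d.lang i).finite_ssf_lengths).subset ?_
  rintro n ⟨d, hd, i, hn⟩
  exact Set.mem_biUnion hd (Set.mem_iUnion.2 ⟨i, hn⟩)

variable [Finite W] {A : Set α}

/-- An `a`-edge with `a ∈ A` can only come from a finite atom, whose words have length at most
`nrBound Q'`. -/
theorem expansion_edge_mem_range (hok : ∀ d ∈ Q', ∀ i : Fin d.k, (d.lang i).okOutside A)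
    {s : SCRPQ α W} (hs : s ∈ Q') {w : Fin s.k → List α} (hw : ∀ i, w i ∈ s.toCRPQ.lang i)
    {a : α} (ha : a ∈ A) (x y : (expansion s.toCRPQ w).V)
    (hxy : (x, a, y) ∈ (expansion s.toCRPQ w).atoms) :
    x ∈ Set.range fun p : Fin s.k × Fin (nrBound Q') =>
      Quot.mk (eqRel s.toCRPQ w) (node s.toCRPQ w p.1 p.2) := by
  obtain ⟨i, j, hj, ⟨⟩⟩ := hxy
  have hwi : w i ∈ (s.lang i).language := hw i
  have hok' := hok s hs i
  rcases hi : s.lang i with ⟨L, hL⟩ | w0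
  · rw [hi] at hwi
    exact ⟨(i, ⟨j, hj.trans_le (length_le_nrBound hs hi hwi)⟩), rfl⟩
  · rw [hi] at hwi hok'
    obtain ⟨b, hb, rfl⟩ := hok'
    obtain ⟨n, hn⟩ := hwi
    simp only [hn, wpow_singleton, List.get_eq_getElem, List.getElem_replicate] at ha
    exact (hb ha).elim

theorem exists_replicate_path_le_of_mem_expU
    (hok : ∀ d ∈ Q', ∀ i : Fin d.k, (d.lang i).okOutside A)
    {F : CQ α} (hF : F ∈ ExpU (toU Q')) {a : α} (ha : a ∈ A) {x y : F.V} {n : ℕ}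
    (h : F.toGDB.Path x (List.replicate n a) y) :
    ∃ n' ≤ natoms Q' * nrBound Q', F.toGDB.Path x (List.replicate n' a) y := by
  obtain ⟨_, hd, w, hw, rfl⟩ := hF
  obtain ⟨s, hs, rfl⟩ := List.mem_map.1 hd
  obtain ⟨n', hn', hp⟩ := GDB.exists_replicate_path_length_le_card _
    (expansion_edge_mem_range hok hs hw ha) h
  refine ⟨n', hn'.trans ?_, hp⟩
  simpa using Nat.mul_le_mul_right _ (k_le_natoms_of_mem hs)

end BoundedPaths

theorem BddIn.exists_qEquiv_qrestrict [Finite V] {q : List (SCRPQ α V)} {A : Set α}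
    (hB : BddIn q A) : ∃ m, QEquiv (SatS q) (SatS (qrestrict q A m)) := by
  obtain ⟨_, Q', hok, hequiv⟩ := hB
  refine ⟨natoms Q' * nrBound Q', fun G => ⟨fun hq => ?_, satS_of_satS_qrestrict⟩⟩
  obtain ⟨F, hF, φ, hφ⟩ := (hequiv G).1 hq
  obtain ⟨d, hd, hdF⟩ := (satS_iff q F.toGDB).1 ((hequiv F.toGDB).2 ⟨F, hF, F.homToG_toGDB⟩)
  have hdF' := hdF.restrict fun _ ha _ _ _ hp =>
    exists_replicate_path_le_of_mem_expU hok hF ha hp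
  exact (satS_iff _ G).2 ⟨_, List.mem_map_of_mem hd, hdF'.map hφ⟩

theorem bddIn_of_qEquiv_qrestrict [Fintype V] {q : List (SCRPQ α V)}
    (hclass : ∀ d ∈ q, ∀ i : Fin d.k, (d.lang i).inSSFaStar) {A : Set α} {m : ℕ}
    (h : QEquiv (SatS q) (SatS (qrestrict q A m))) : BddIn q A := by
  refine ⟨Fintype.card V, (qrestrict q A m).map (SCRPQ.rename (Fintype.equivFin V)), ?_,
    fun G => (h G).trans (satS_map_rename _ _ G).symm⟩
  simp only [qrestrict, List.map_map, List.mem_map]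
  rintro _ ⟨d, hd, rfl⟩ i
  exact AtomLang.InSSFaStar.okOutside_restrict (hclass d hd i)

theorem statement12_general {α V : Type} [Fintype V] (q : List (SCRPQ α V))
    (hclass : ∀ d ∈ q, ∀ i : Fin d.k, (d.lang i).inSSFaStar) (A : Set α) :
    BddIn q A ↔ ∃ m : ℕ, QEquiv (SatS q) (SatS (qrestrict q A m)) :=
  ⟨BddIn.exists_qEquiv_qrestrict, fun ⟨_, hm⟩ => bddIn_of_qEquiv_qrestrict hclass hm⟩

/-- a query `q ∈ UCRPQ(SSF, a*)` is `A`-bounded iff it is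
equivalent to `q(A, m)` for some `m ∈ ℕ`. -/
theorem statement12 {α V : Type} [Fintype α] [Fintype V] (q : List (SCRPQ α V))
    (hclass : ∀ d ∈ q, ∀ i : Fin d.k, (d.lang i).inSSFaStar) (A : Set α) :
    BddIn q A ↔ ∃ m : ℕ, QEquiv (SatS q) (SatS (qrestrict q A m)) :=
  statement12_general q hclass A

end Paper
end
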